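/- arXiv:0907.5132 — 4 statements merged into one kernel-verified Lean document; each statement's English description precedes it below -/
import Mathlib

section
/- For the homomorphism h with h(A)=ABB, h(B)=BBA, h(C)=h(D)=BAB: for all w₁ ∈ {A,C}* and w₂ ∈ {B,D}*, if h(w₁) = h(w₂)^R (the reversal of h(w₂)), then w₁w₂ derives the empty string using only the rules AB→λ and CD→λ. -/
/-!
Reversing a letter image of `h` gives the image of the dual letter (`A ↔ B`, `C ↔ D`), so
`(h w)ᴿ = h (dual (wᴿ))`. Since `h` is a uniform code that separates `B` from `D`, it is injective
on `{B,D}*`; hence `h w₁ = (h w₂)ᴿ` forces `w₂ = dual (w₁ᴿ)`, and `w₁ · dual (w₁ᴿ)` cancels from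
the middle outwards, each `A` meeting a `B` and each `C` a `D`.
-/

inductive L4 where | A | B | C | D deriving DecidableEq

open L4

/-- Letter images of the homomorphism h: h(A)=ABB, h(B)=BBA, h(C)=h(D)=BAB. -/
def himg : L4 → List L4
  | A => [A, B, B]
  | B => [B, B, A]
  | C => [B, A, B]
  | D => [B, A, B]

/-- The monoid homomorphism h on {A,B,C,D}* determined by the letter images. -/
def h (w : List L4) : List L4 := w.flatMap himg

/-- One deletion step by the rules AB→λ or CD→λ: delete an adjacent factor AB or CD. -/
def DelStep (u v : List L4) : Prop :=
  ∃ x y : List L4, (u = x ++ [A, B] ++ y ∨ u = x ++ [C, D] ++ y) ∧ v = x ++ y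

theorem List.eq_of_flatMap_eq_of_length_eq {α β : Type*} {f : α → List β} {n : ℕ} (hn : 0 < n)
    (hf : ∀ a, (f a).length = n) {S : Set α} (hS : S.InjOn f) :
    ∀ {u v : List α}, (∀ a ∈ u, a ∈ S) → (∀ a ∈ v, a ∈ S) → u.flatMap f = v.flatMap f → u = v
  | [], [], _, _, _ => rfl
  | [], a :: _, _, _, huv | a :: _, [], _, _, huv => by
    have := congrArg List.length huv
    simp only [List.flatMap_nil, List.flatMap_cons, List.length_append, List.length_nil, hf] at this
    omega
  | a :: u, b :: v, hu, hv, huv => by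
    simp only [List.flatMap_cons] at huv
    obtain ⟨hab, huv⟩ := List.append_inj huv (by rw [hf, hf])
    rw [hS (hu a (by simp)) (hv b (by simp)) hab,
      List.eq_of_flatMap_eq_of_length_eq hn hf hS (fun c hc => hu c (by simp [hc]))
        (fun c hc => hv c (by simp [hc])) huv]

def L4.dual : L4 → L4
  | A => B
  | B => A
  | C => D
  | D => C

theorem reverse_himg (c : L4) : (himg c).reverse = himg c.dual := by
  cases c <;> rfl

theorem reverse_h (w : List L4) : (h w).reverse = h (w.reverse.map L4.dual) := by
  simp only [h, List.reverse_flatMap, List.flatMap_map, Function.comp_def, reverse_himg]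

theorem himg_injOn_BD : Set.InjOn himg {B, D} := by
  rintro _ (rfl | rfl) _ (rfl | rfl) hcd <;> first | rfl | simp [himg] at hcd

theorem eq_of_h_eq_of_mem_BD {u v : List L4} (hu : ∀ c ∈ u, c = B ∨ c = D)
    (hv : ∀ c ∈ v, c = B ∨ c = D) (huv : h u = h v) : u = v :=
  List.eq_of_flatMap_eq_of_length_eq (n := 3) (by norm_num) (fun c => by cases c <;> rfl)
    himg_injOn_BD hu hv huv

theorem DelStep.append_append {u v : List L4} (hs : DelStep u v) (x y : List L4) :
    DelStep (x ++ u ++ y) (x ++ v ++ y) := by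
  obtain ⟨a, b, hu, rfl⟩ := hs
  refine ⟨x ++ a, b ++ y, ?_, by simp⟩
  rcases hu with rfl | rfl
  · left; simp
  · right; simp

theorem reflTransGen_delStep_append_append {u v : List L4}
    (hs : Relation.ReflTransGen DelStep u v) (x y : List L4) :
    Relation.ReflTransGen DelStep (x ++ u ++ y) (x ++ v ++ y) :=
  Relation.ReflTransGen.lift (fun w => x ++ w ++ y)
    (fun _ _ hst => DelStep.append_append hst x y) _ _ hs

theorem delStep_dual {c : L4} (hc : c = A ∨ c = C) : DelStep [c, c.dual] [] := by
  rcases hc with rfl | rfl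
  · exact ⟨[], [], Or.inl rfl, rfl⟩
  · exact ⟨[], [], Or.inr rfl, rfl⟩

theorem reflTransGen_delStep_append_map_dual_reverse {u : List L4} (hu : ∀ c ∈ u, c = A ∨ c = C) :
    Relation.ReflTransGen DelStep (u ++ u.reverse.map L4.dual) [] := by
  induction u with
  | nil => exact .refl
  | cons c t ih =>
    have inner : Relation.ReflTransGen DelStep
        ([c] ++ (t ++ t.reverse.map L4.dual) ++ [c.dual]) [c, c.dual] :=
      reflTransGen_delStep_append_append (ih fun x hx => hu x (by simp [hx])) [c] [c.dual]
    simpa using inner.tail (delStep_dual (hu c (by simp)))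

/-- If w₁ ∈ {A,C}*, w₂ ∈ {B,D}*, and h(w₁) equals the reversal of h(w₂), then
w₁w₂ derives the empty string using only the rules AB→λ and CD→λ. -/
theorem cancellation_of_mirror (w₁ w₂ : List L4)
    (h₁ : ∀ c ∈ w₁, c = A ∨ c = C) (h₂ : ∀ c ∈ w₂, c = B ∨ c = D)
    (hrev : h w₁ = (h w₂).reverse) :
    Relation.ReflTransGen DelStep (w₁ ++ w₂) [] := by
  have hdual : ∀ c ∈ w₁.reverse.map L4.dual, c = B ∨ c = D := by
    simp only [List.mem_map, List.mem_reverse]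
    rintro _ ⟨a, ha, rfl⟩
    rcases h₁ a ha with rfl | rfl
    · exact .inl rfl
    · exact .inr rfl
  have hw₂ : w₂ = w₁.reverse.map L4.dual :=
    eq_of_h_eq_of_mem_BD h₂ hdual (by rw [← reverse_h, hrev, List.reverse_reverse])
  rw [hw₂]
  exact reflTransGen_delStep_append_map_dual_reverse h₁
end

section
/- For the homomorphism h with h(A)=ABB, h(B)=BBA, h(C)=h(D)=BAB, and for all w₁ ∈ {A,C}*, w₂ ∈ {B,D}*: w₁w₂ ⇒* λ by rules AB→λ and CD→λ implies h(w₁) = h(w₂)^R. -/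
open L4

theorem List.eq_of_append_eq_at_boundary {α : Type*} {P : α → Prop} {l₁ l₂ x y : List α}
    {a b : α} (h₁ : ∀ c ∈ l₁, P c) (h₂ : ∀ c ∈ l₂, ¬P c) (ha : P a) (hb : ¬P b)
    (heq : l₁ ++ l₂ = x ++ a :: b :: y) : l₁ = x ++ [a] ∧ l₂ = b :: y := by
  induction x generalizing l₁ with
  | nil =>
    rcases l₁ with _ | ⟨c, _ | ⟨d, l₁⟩⟩
    · exact absurd ha (h₂ a (by simp only [List.nil_append] at heq; simp [heq]))
    · simpa using heq
    · simp only [List.cons_append, List.nil_append, List.cons.injEq] at heq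
      exact absurd (heq.2.1 ▸ h₁ d (by simp)) hb
  | cons c x ih =>
    rcases l₁ with _ | ⟨d, l₁⟩
    · exact absurd ha (h₂ a (by simp only [List.nil_append] at heq; simp [heq]))
    · simp only [List.cons_append, List.cons.injEq] at heq
      obtain ⟨rfl, heq⟩ := heq
      simpa using ih (fun c hc => h₁ c (by simp [hc])) heq

def partner : L4 → L4
  | A => B
  | B => A
  | C => D
  | D => C

theorem DelStep.exists_of_append {w₁ w₂ v : List L4} (h₁ : ∀ c ∈ w₁, c = A ∨ c = C)
    (h₂ : ∀ c ∈ w₂, c = B ∨ c = D) (hs : DelStep (w₁ ++ w₂) v) :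
    ∃ a u₁ u₂, w₁ = u₁ ++ [a] ∧ w₂ = partner a :: u₂ ∧ v = u₁ ++ u₂ := by
  obtain ⟨x, y, hxy, rfl⟩ := hs
  obtain ⟨a, ha, hsplit⟩ : ∃ a, (a = A ∨ a = C) ∧ w₁ ++ w₂ = x ++ a :: partner a :: y := by
    rcases hxy with hAB | hCD
    · exact ⟨A, by simp, by simpa [partner] using hAB⟩
    · exact ⟨C, by simp, by simpa [partner] using hCD⟩
  have hpa : ¬(partner a = A ∨ partner a = C) := by rcases ha with rfl | rfl <;> simp [partner]
  obtain ⟨rfl, rfl⟩ := List.eq_of_append_eq_at_boundary (P := fun c => c = A ∨ c = C) h₁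
    (fun c hc => by rcases h₂ c hc with rfl | rfl <;> simp) ha hpa hsplit
  exact ⟨a, x, y, rfl, rfl, rfl⟩

theorem eq_reverse_map_partner_of_reflTransGen {w₁ w₂ : List L4}
    (h₁ : ∀ c ∈ w₁, c = A ∨ c = C) (h₂ : ∀ c ∈ w₂, c = B ∨ c = D)
    (hder : Relation.ReflTransGen DelStep (w₁ ++ w₂) []) :
    w₂ = (w₁.map partner).reverse := by
  generalize hu : w₁ ++ w₂ = u at hder
  induction hder using Relation.ReflTransGen.head_induction_on generalizing w₁ w₂ with
  | refl =>
    obtain ⟨rfl, rfl⟩ := List.append_eq_nil_iff.mp hu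
    rfl
  | head hs _ ih =>
    subst hu
    obtain ⟨a, u₁, u₂, rfl, rfl, rfl⟩ := hs.exists_of_append h₁ h₂
    rw [ih (fun c hc => h₁ c (by simp [hc])) (fun c hc => h₂ c (by simp [hc])) rfl]
    simp

theorem himg_partner (c : L4) : himg (partner c) = (himg c).reverse := by
  cases c <;> rfl

theorem h_reverse_map_partner (w : List L4) : h (w.map partner).reverse = (h w).reverse := by
  rw [h, h, List.flatMap_reverse, List.flatMap_map]
  simp only [Function.comp_def, himg_partner, List.reverse_reverse]

/-- If w₁ ∈ {A,C}*, w₂ ∈ {B,D}*, and w₁w₂ ⇒* λ by the rules AB→λ and CD→λ,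
then h(w₁) equals the reversal of h(w₂). -/
theorem mirror_of_cancellation (w₁ w₂ : List L4)
    (h₁ : ∀ c ∈ w₁, c = A ∨ c = C) (h₂ : ∀ c ∈ w₂, c = B ∨ c = D)
    (hder : Relation.ReflTransGen DelStep (w₁ ++ w₂) []) :
    h w₁ = (h w₂).reverse := by
  rw [eq_reverse_map_partner_of_reflTransGen h₁ h₂ hder, h_reverse_map_partner,
    List.reverse_reverse]
end

section
/- In Geffert normal form, every string w₁ ∈ {A,C}* and w₂ ∈ {B,D}* satisfies: w₁w₂ ⇒* λ by rules AB→λ and CD→λ if and only if w₂ is obtained from the reversal of w₁ by replacing each A with B and each C with D. -/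
open L4

/-- The letterwise bijection σ with σ(A)=B, σ(C)=D (and σ(B)=A, σ(D)=C). -/
def sigma : L4 → L4
  | A => B
  | B => A
  | C => D
  | D => C

/- The deletion system is a group-like cancellation, so every word has a canonical stack
reduction `reduce`: it is invariant under deletion steps and reachable by them, hence
`u ⇒* λ` iff `reduce u = λ`.  For `w₁ ∈ {A,C}*` and `w₂ ∈ {B,D}*`, the word `w₂` is already
reduced, and pushing the letters of `w₁` onto it from the right must cancel each one against
its mirror image `σ c` on top of the stack. -/

def reduceCons : L4 → List L4 → List L4
  | A, B :: t => t
  | C, D :: t => t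
  | c, v => c :: v

def reduce (u : List L4) : List L4 := u.foldr reduceCons []

lemma reduce_append (u v : List L4) : reduce (u ++ v) = u.foldr reduceCons (reduce v) :=
  List.foldr_append

lemma reduceCons_of_closing {c : L4} (hc : c = B ∨ c = D) (v : List L4) :
    reduceCons c v = c :: v := by
  rcases hc with rfl | rfl <;> cases v <;> rfl

lemma reduceCons_eq_iff {c : L4} {v z : List L4} (hc : c = A ∨ c = C)
    (hz : ∀ x ∈ z, x = B ∨ x = D) : reduceCons c v = z ↔ v = sigma c :: z := by
  constructor
  · rintro rfl
    rcases hc with rfl | rfl <;> rcases v with _ | ⟨_ | _ | _ | _, t⟩ <;>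
      simp_all [reduceCons, sigma]
  · rintro rfl
    rcases hc with rfl | rfl <;> rfl

lemma reduce_of_closing {w : List L4} (hw : ∀ c ∈ w, c = B ∨ c = D) : reduce w = w := by
  induction w with
  | nil => rfl
  | cons c t ih =>
    rw [List.forall_mem_cons] at hw
    rw [reduce, List.foldr_cons, ← reduce, ih hw.2, reduceCons_of_closing hw.1]

lemma DelStep.reduce_eq {u v : List L4} (huv : DelStep u v) : reduce u = reduce v := by
  -- `reduceCons B` and `reduceCons D` are definitionally `List.cons`, so `[A, B]` and `[C, D]`
  -- fold to the identity by `rfl`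
  obtain ⟨x, y, rfl | rfl, rfl⟩ := huv <;>
    rw [List.append_assoc, reduce_append, reduce_append, reduce_append] <;>
    congr 1

lemma DelStep.cons {u v : List L4} (c : L4) (huv : DelStep u v) : DelStep (c :: u) (c :: v) := by
  obtain ⟨x, y, hu, rfl⟩ := huv
  exact ⟨c :: x, y, by rcases hu with rfl | rfl <;> simp, rfl⟩

lemma reflTransGen_reduceCons (c : L4) (v : List L4) :
    Relation.ReflTransGen DelStep (c :: v) (reduceCons c v) := by
  rcases c with _ | _ | _ | _ <;> rcases v with _ | ⟨_ | _ | _ | _, t⟩ <;>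
    first
      | exact .refl
      | exact .single ⟨[], t, by simp, rfl⟩

lemma reflTransGen_reduce (u : List L4) : Relation.ReflTransGen DelStep u (reduce u) := by
  induction u with
  | nil => exact .refl
  | cons c t ih =>
    exact (ih.lift (c :: ·) fun _ _ ↦ DelStep.cons c).trans (reflTransGen_reduceCons c _)

lemma reduce_eq_of_reflTransGen {u v : List L4} (huv : Relation.ReflTransGen DelStep u v) :
    reduce u = reduce v := by
  induction huv with
  | refl => rfl
  | tail _ hstep ih => rw [ih, hstep.reduce_eq]

lemma reflTransGen_nil_iff_reduce_eq_nil (u : List L4) :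
    Relation.ReflTransGen DelStep u [] ↔ reduce u = [] :=
  ⟨reduce_eq_of_reflTransGen, fun hu ↦ hu ▸ reflTransGen_reduce u⟩

lemma foldr_reduceCons_eq_iff {w₁ z : List L4} (w₂ : List L4) (h₁ : ∀ c ∈ w₁, c = A ∨ c = C)
    (hz : ∀ x ∈ z, x = B ∨ x = D) :
    w₁.foldr reduceCons w₂ = z ↔ w₂ = w₁.reverse.map sigma ++ z := by
  induction w₁ generalizing z with
  | nil => simp
  | cons c rest ih =>
    rw [List.forall_mem_cons] at h₁
    have hσc : sigma c = B ∨ sigma c = D := by rcases h₁.1 with rfl | rfl <;> simp [sigma]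
    rw [List.foldr_cons, reduceCons_eq_iff h₁.1 hz, ih h₁.2 (List.forall_mem_cons.2 ⟨hσc, hz⟩)]
    simp

/-- For w₁ ∈ {A,C}* and w₂ ∈ {B,D}*: w₁w₂ ⇒* λ by the rules AB→λ and CD→λ
iff w₂ is obtained from the reversal of w₁ by replacing each A with B and each C with D. -/
theorem cancellation_iff_mirror (w₁ w₂ : List L4)
    (h₁ : ∀ c ∈ w₁, c = A ∨ c = C) (h₂ : ∀ c ∈ w₂, c = B ∨ c = D) :
    Relation.ReflTransGen DelStep (w₁ ++ w₂) [] ↔ w₂ = w₁.reverse.map sigma := by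
  rw [reflTransGen_nil_iff_reduce_eq_nil, reduce_append, reduce_of_closing h₂,
    foldr_reduceCons_eq_iff w₂ h₁ (by simp), List.append_nil]
end

section
/- Every nonerasing scattered context grammar generates a context-sensitive language. -/
/-- Symbols of a grammar: nonterminals or terminals. -/
inductive GSym (N T : Type) where
  | nt : N → GSym N T
  | tm : T → GSym N T
  deriving DecidableEq

abbrev Str (N T : Type) := List (GSym N T)

/-- `SCMatch ps u v` : applying the scattered context production with components `ps`
(an ordered list of pairs `(Aᵢ, xᵢ)`) rewrites `u` to `v`. -/
def SCMatch {N T : Type} : List (N × Str N T) → Str N T → Str N T → Prop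
  | [], u, v => u = v
  | (A, x) :: ps, u, v =>
      ∃ u₁ u' v', u = u₁ ++ GSym.nt A :: u' ∧ v = u₁ ++ x ++ v' ∧ SCMatch ps u' v'

/-- A scattered context grammar (with a fixed set of productions, each a nonempty
list of pairs of a nonterminal and its replacement string). -/
structure SCG (N T : Type) where
  prods : List (List (N × Str N T))
  start : N
  nonempty_prods : ∀ p ∈ prods, p ≠ []

def SCG.Step {N T : Type} (g : SCG N T) (u v : Str N T) : Prop :=
  ∃ p ∈ g.prods, SCMatch p u v

def SCG.language {N T : Type} (g : SCG N T) : Set (List T) :=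
  {w | Relation.ReflTransGen g.Step [GSym.nt g.start] (w.map GSym.tm)}


def SCG.Nonerasing {N T : Type} (g : SCG N T) : Prop :=
  ∀ p ∈ g.prods, ∀ q ∈ p, q.2 ≠ []

/-- A general (phrase-structure) grammar: productions α → β with α containing
a nonterminal. -/
structure Grammar (N T : Type) where
  prods : List (Str N T × Str N T)
  start : N
  lhs_nt : ∀ p ∈ prods, ∃ A : N, GSym.nt A ∈ p.1

def Grammar.Step {N T : Type} (g : Grammar N T) (u v : Str N T) : Prop :=
  ∃ p ∈ g.prods, ∃ x y : Str N T, u = x ++ p.1 ++ y ∧ v = x ++ p.2 ++ y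

def Grammar.language {N T : Type} (g : Grammar N T) : Set (List T) :=
  {w | Relation.ReflTransGen g.Step [GSym.nt g.start] (w.map GSym.tm)}

/-- A grammar is context-sensitive (monotone) if |α| ≤ |β| for every production α → β. -/
def Grammar.ContextSensitive {N T : Type} (g : Grammar N T) : Prop :=
  ∀ p ∈ g.prods, p.1.length ≤ p.2.length

/-!
`g.simGrammar` works on the sentential forms of `g` in which exactly one symbol is marked. An idle
mark walks freely in both directions. On a nonterminal `A` it may start a production
`(A, x) :: r`: `A` becomes `x`, and the last symbol of `x` is marked with the components `r` still
to be applied. Such a mark only moves right and applies its next component `(B, y)` when it meets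
`B`, so the components are applied left to right, as in one scattered context step; when none is
left the mark is idle again, and at the end it is dropped. As the mark rides on a symbol and every
`x` is nonempty, no rule shortens the string. A marked symbol pairs a symbol occurring in `g` with
a suffix of a production, so there are finitely many of them.
-/

namespace GSym

variable {N N' T : Type}

def mapNT (f : N → N') : GSym N T → GSym N' T
  | nt A => nt (f A)
  | tm a => tm a

theorem mapNT_injective {f : N → N'} (hf : Function.Injective f) :
    Function.Injective (mapNT (T := T) f) := by
  rintro (A | a) (B | b) h <;> simp_all [mapNT, hf.eq_iff]

theorem map_mapNT_map_tm (f : N → N') (w : List T) :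
    (w.map tm).map (mapNT f) = w.map tm := by
  simp [Function.comp_def, mapNT]

end GSym

theorem List.eq_of_append_cons_eq_append_cons {α : Type*} {u v x y : List α} {c c' : α}
    (hu : c' ∉ u) (hv : c' ∉ v) (h : u ++ c :: v = x ++ c' :: y) : x = u ∧ c' = c ∧ y = v := by
  rcases List.append_eq_append_iff.1 h with ⟨_ | ⟨a, as⟩, rfl, h'⟩ | ⟨_ | ⟨b, bs⟩, rfl, h'⟩
  · simp_all
  · simp only [List.cons_append, List.cons.injEq] at h'
    simp [h'.2] at hv
  · simp_all
  · simp only [List.cons_append, List.cons.injEq] at h'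
    simp [← h'.1] at hu

namespace SCMatch

variable {N T : Type} {ps : List (N × Str N T)} {u v : Str N T}

theorem append_right (h : SCMatch ps u v) (z : Str N T) : SCMatch ps (u ++ z) (v ++ z) := by
  induction ps generalizing u v with
  | nil => exact congrArg (· ++ z) h
  | cons q ps ih =>
    obtain ⟨u₁, u', v', rfl, rfl, hm⟩ := h
    exact ⟨u₁, u' ++ z, v' ++ z, by simp, by simp, ih hm⟩

theorem append_singleton (h : SCMatch ps u v) (A : N) (x : Str N T) :
    SCMatch (ps ++ [(A, x)]) (u ++ [GSym.nt A]) (v ++ x) := by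
  induction ps generalizing u v with
  | nil => exact ⟨u, [], [], rfl, by rw [h, List.append_nil], rfl⟩
  | cons q ps ih =>
    obtain ⟨u₁, u', v', rfl, rfl, hm⟩ := h
    exact ⟨u₁, u' ++ [GSym.nt A], v' ++ x, by simp, by simp, ih hm⟩

end SCMatch

namespace Grammar

variable {N T : Type}

noncomputable def ofFinite (R : Set (Str N T × Str N T)) (hR : R.Finite)
    (hnt : ∀ p ∈ R, ∃ A, GSym.nt A ∈ p.1) (S : N) : Grammar N T where
  prods := hR.toFinset.toList
  start := S
  lhs_nt p hp := hnt p (by simpa using hp)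

variable {R : Set (Str N T × Str N T)} {hR : R.Finite} {hnt : ∀ p ∈ R, ∃ A, GSym.nt A ∈ p.1}
  {S : N}

theorem mem_ofFinite_prods {p : Str N T × Str N T} : p ∈ (ofFinite R hR hnt S).prods ↔ p ∈ R := by
  simp [ofFinite]

theorem ofFinite_step {l r : Str N T} (h : (l, r) ∈ R) (x y : Str N T) :
    (ofFinite R hR hnt S).Step (x ++ l ++ y) (x ++ r ++ y) :=
  ⟨(l, r), mem_ofFinite_prods.2 h, x, y, rfl, rfl⟩

theorem ofFinite_contextSensitive (h : ∀ p ∈ R, p.1.length ≤ p.2.length) :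
    (ofFinite R hR hnt S).ContextSensitive :=
  fun p hp => h p (mem_ofFinite_prods.1 hp)

end Grammar

namespace SCG

variable {N T : Type} (g : SCG N T)

def IsSentential (v : Str N T) : Prop :=
  Relation.ReflTransGen g.Step [GSym.nt g.start] v

def symbols : Set (GSym N T) :=
  Set.range GSym.nt ∪ {s | ∃ q ∈ g.prods.flatten, s ∈ q.2}

def states : Set (List (N × Str N T)) :=
  insert [] {r | ∃ p ∈ g.prods, r <:+ p}

/-- `u ++ β` arises from a sentential form by applying, inside `u`, the first components `q` of a
production `q ++ r`; for `r = []` this also admits every sentential form `u ++ β`. -/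
def InProgress (u : Str N T) (r : List (N × Str N T)) (β : Str N T) : Prop :=
  r = [] ∧ g.IsSentential (u ++ β) ∨
    ∃ q α, q ++ r ∈ g.prods ∧ g.IsSentential (α ++ β) ∧ SCMatch q α u

variable {g}

theorem finite_symbols [Finite N] : g.symbols.Finite :=
  (Set.finite_range _).union <| (List.finite_toSet (g.prods.flatten.flatMap Prod.snd)).subset
    fun _ ⟨q, hq, hs⟩ => List.mem_flatMap.2 ⟨q, hq, hs⟩

theorem finite_states : g.states.Finite :=
  (List.finite_toSet (g.prods.flatMap List.tails)).insert [] |>.subset <|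
    Set.insert_subset_insert fun _ ⟨p, hp, hr⟩ =>
      List.mem_flatMap.2 ⟨p, hp, (List.mem_tails _ _).2 hr⟩

theorem nil_mem_states : [] ∈ g.states := Set.mem_insert _ _

theorem mem_states_of_mem_prods {p : List (N × Str N T)} (hp : p ∈ g.prods) : p ∈ g.states :=
  .inr ⟨p, hp, List.suffix_refl p⟩

theorem mem_states_of_cons_mem {c : N × Str N T} {r : List (N × Str N T)}
    (h : c :: r ∈ g.states) : r ∈ g.states := by
  rcases h with h | ⟨p, hp, hr⟩
  · cases h
  · exact .inr ⟨p, hp, (List.suffix_cons c r).trans hr⟩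

theorem mem_flatten_of_mem_states {c : N × Str N T} {r : List (N × Str N T)}
    (h : r ∈ g.states) (hc : c ∈ r) : c ∈ g.prods.flatten := by
  rcases h with rfl | ⟨p, hp, hr⟩
  · cases hc
  · exact List.mem_flatten.2 ⟨p, hp, hr.subset hc⟩

theorem mem_symbols_of_mem_rhs {q : N × Str N T} (hq : q ∈ g.prods.flatten) {s : GSym N T}
    (hs : s ∈ q.2) : s ∈ g.symbols :=
  .inr ⟨q, hq, hs⟩

theorem IsSentential.inProgress {u β : Str N T} {A : N} {x : Str N T}
    {r : List (N × Str N T)} (h : g.IsSentential (u ++ GSym.nt A :: β))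
    (hp : (A, x) :: r ∈ g.prods) : g.InProgress (u ++ x) r β :=
  .inr ⟨[(A, x)], u ++ [GSym.nt A], hp, by simpa using h, u, [], [], rfl, by simp, rfl⟩

namespace InProgress

variable {u β : Str N T} {r : List (N × Str N T)}

theorem isSentential (h : g.InProgress u [] β) : g.IsSentential (u ++ β) := by
  rcases h with ⟨-, h⟩ | ⟨q, α, hq, hα, hm⟩
  · exact h
  · rw [List.append_nil] at hq
    exact hα.tail ⟨q, hq, hm.append_right β⟩

theorem snoc {t : GSym N T} (h : g.InProgress u r (t :: β)) : g.InProgress (u ++ [t]) r β := by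
  rcases h with ⟨hr, h⟩ | ⟨q, α, hq, hα, hm⟩
  · exact .inl ⟨hr, by simpa using h⟩
  · exact .inr ⟨q, α ++ [t], hq, by simpa using hα, hm.append_right [t]⟩

theorem unsnoc {t : GSym N T} (h : g.InProgress (u ++ [t]) [] β) : g.InProgress u [] (t :: β) :=
  .inl ⟨rfl, by simpa using h.isSentential⟩

theorem apply {A : N} {x : Str N T} (h : g.InProgress u ((A, x) :: r) (GSym.nt A :: β)) :
    g.InProgress (u ++ x) r β := by
  rcases h with ⟨hr, -⟩ | ⟨q, α, hq, hα, hm⟩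
  · cases hr
  · exact .inr ⟨q ++ [(A, x)], α ++ [GSym.nt A], by simpa using hq, by simpa using hα,
      hm.append_singleton A x⟩

end InProgress

variable (g)

abbrev Letter : Type := g.symbols

abbrev State : Type := g.states

/-- The marked symbol `(a, r)` is the letter `a` carrying the components `r` of a production that
are still to be applied; `r = []` is the idle mark. -/
abbrev SimNT : Type := N ⊕ (g.Letter × g.State)

instance [Finite N] : Finite g.Letter := finite_symbols.to_subtype

instance : Finite g.State := finite_states.to_subtype

def startLetter : g.Letter := ⟨.nt g.start, .inl ⟨_, rfl⟩⟩

variable {g}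

def idle : g.State := ⟨[], nil_mem_states⟩

@[simp] theorem val_idle : (idle : g.State).val = [] := rfl

def plain (a : g.Letter) : GSym g.SimNT T := a.val.mapNT Sum.inl

def marked (a : g.Letter) (r : g.State) : GSym g.SimNT T := .nt (.inr (a, r))

def markedForm (γ : List g.Letter) (s : g.Letter) (r : g.State) (β : List g.Letter) :
    Str g.SimNT T :=
  γ.map plain ++ marked s r :: β.map plain

variable (g) in
inductive Rule : Str g.SimNT T → Str g.SimNT T → Prop
  | moveRight (k s : g.Letter) (r : g.State) : Rule [marked k r, plain s] [plain k, marked s r]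
  | moveLeft (k s : g.Letter) : Rule [plain k, marked s idle] [marked k idle, plain s]
  | applyFirst {a s : g.Letter} {r : g.State} {A : N} {x : List g.Letter} (ha : a.val = .nt A)
      (hp : (A, (x ++ [s]).unattach) :: r.val ∈ g.prods) :
      Rule [marked a idle] (x.map plain ++ [marked s r])
  | applyNext {k a s : g.Letter} {r r' : g.State} {A : N} {x : List g.Letter}
      (ha : a.val = .nt A) (hr : r.val = (A, (x ++ [s]).unattach) :: r'.val) :
      Rule [marked k r, plain a] (plain k :: x.map plain ++ [marked s r'])
  | unmark (k : g.Letter) : Rule [marked k idle] [plain k]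

theorem Rule.length_le {l r : Str g.SimNT T} (h : g.Rule l r) : l.length ≤ r.length := by
  cases h <;> simp

theorem Rule.exists_marked_mem {l r : Str g.SimNT T} (h : g.Rule l r) :
    ∃ a r', marked a r' ∈ l := by
  cases h with
  | moveLeft k s => exact ⟨_, _, List.mem_of_getLast? rfl⟩
  | _ => exact ⟨_, _, List.mem_cons_self⟩

variable (g) in
theorem finite_rules [Finite N] : {p : Str g.SimNT T × Str g.SimNT T | g.Rule p.1 p.2}.Finite := by
  let σ : g.Letter ⊕ (g.Letter × g.State) → GSym g.SimNT T :=
    Sum.elim plain fun a => marked a.1 a.2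
  obtain ⟨C, hC⟩ : ∃ C, ∀ q ∈ g.prods.flatten, q.2.length ≤ C :=
    ⟨_, fun q hq => List.le_sum_of_mem (List.mem_map_of_mem (f := fun q => q.2.length) hq)⟩
  let L := C + 2
  refine (((List.finite_length_le _ L).prod (List.finite_length_le _ L)).image
    fun p => (p.1.map σ, p.2.map σ)).subset ?_
  rintro ⟨lhs, rhs⟩ (h : g.Rule lhs rhs)
  cases h with
  | moveRight k s r =>
    exact ⟨([.inr (k, r), .inl s], [.inl k, .inr (s, r)]), by simp [L], rfl⟩
  | moveLeft k s =>
    exact ⟨([.inl k, .inr (s, idle)], [.inr (k, idle), .inl s]), by simp [L], rfl⟩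
  | @applyFirst a s r A x ha hp =>
    have := hC _ (List.mem_flatten.2 ⟨_, hp, List.mem_cons_self⟩)
    refine ⟨([.inr (a, idle)], x.map .inl ++ [.inr (s, r)]), ?_, by simp [σ, Function.comp_def]⟩
    simp only [List.length_unattach, List.length_append] at this
    simp [L]; omega
  | @applyNext k a s r r' A x ha hr =>
    have := hC _ (mem_flatten_of_mem_states r.2 (hr ▸ List.mem_cons_self))
    refine ⟨([.inr (k, r), .inl a], .inl k :: x.map .inl ++ [.inr (s, r')]), ?_,
      by simp [σ, Function.comp_def]⟩
    simp only [List.length_unattach, List.length_append] at this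
    simp [L]; omega
  | unmark k => exact ⟨([.inr (k, idle)], [.inl k]), by simp [L], rfl⟩

variable (g) in
noncomputable def simGrammar [Finite N] : Grammar g.SimNT T :=
  .ofFinite _ (finite_rules g)
    (fun _ h => let ⟨_, _, h⟩ := Rule.exists_marked_mem h; ⟨_, h⟩) (.inr (g.startLetter, idle))

theorem simGrammar_contextSensitive [Finite N] : g.simGrammar.ContextSensitive :=
  Grammar.ofFinite_contextSensitive fun _ h => Rule.length_le h

theorem plain_injective : Function.Injective (plain : g.Letter → GSym g.SimNT T) :=
  (GSym.mapNT_injective Sum.inl_injective).comp Subtype.val_injective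

theorem map_plain (w : List g.Letter) :
    w.map plain = w.unattach.map (GSym.mapNT Sum.inl) := by
  simp [plain]

theorem marked_not_mem_map_plain {a : g.Letter} {r : g.State} {w : List g.Letter} :
    marked a r ∉ w.map plain := by
  simp only [List.mem_map, not_exists, not_and]
  intro b _ h
  rcases b with ⟨_ | _, _⟩ <;> simp [plain, marked, GSym.mapNT] at h

theorem markedForm_eq_append {γ β π σ : List g.Letter} {s k : g.Letter} {r r' : g.State}
    {x y : Str g.SimNT T}
    (h : markedForm γ s r β = x ++ (π.map plain ++ marked k r' :: σ.map plain) ++ y) :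
    ∃ γ' β', γ = γ' ++ π ∧ β = σ ++ β' ∧ k = s ∧ r' = r ∧
      x = γ'.map plain ∧ y = β'.map plain := by
  rw [markedForm, ← List.append_assoc, List.append_assoc _ _ y, List.cons_append] at h
  obtain ⟨hγ, hk, hβ⟩ := List.eq_of_append_cons_eq_append_cons
    marked_not_mem_map_plain marked_not_mem_map_plain h
  obtain ⟨γ', π', rfl, rfl, hπ⟩ := List.map_eq_append_iff.1 hγ.symm
  obtain ⟨σ', β', rfl, hσ, rfl⟩ := List.map_eq_append_iff.1 hβ.symm
  obtain rfl := List.map_injective_iff.2 plain_injective hπ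
  obtain rfl := List.map_injective_iff.2 plain_injective hσ
  simp only [marked, GSym.nt.injEq, Sum.inr.injEq, Prod.mk.injEq] at hk
  exact ⟨γ', β', rfl, rfl, hk.1, hk.2, rfl, rfl⟩

variable (g) in
def IsSimForm (u : Str g.SimNT T) : Prop :=
  (∃ w : List g.Letter, g.IsSentential w.unattach ∧ u = w.map plain) ∨
    ∃ γ s r β, g.InProgress (γ ++ [s]).unattach r.val β.unattach ∧ u = markedForm γ s r β

theorem InProgress.isSimForm_rule {γ β : List g.Letter} {c : g.Letter} {r₀ : g.State}
    {l r x y : Str g.SimNT T} (hp : g.InProgress (γ ++ [c]).unattach r₀.val β.unattach)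
    (hu : x ++ l ++ y = markedForm γ c r₀ β) (h : g.Rule l r) : g.IsSimForm (x ++ r ++ y) := by
  cases h with
  | moveRight k s r =>
    obtain ⟨γ', β', hγ, hβ, rfl, rfl, rfl, rfl⟩ :=
      markedForm_eq_append (π := []) (σ := [s]) hu.symm
    subst γ β
    refine .inr ⟨γ' ++ [k], s, r, β', ?_, by simp [markedForm]⟩
    have hp : g.InProgress (γ' ++ [k]).unattach r (s.val :: β'.unattach) := by simpa using hp
    simpa using hp.snoc
  | moveLeft k s =>
    obtain ⟨γ', β', hγ, hβ, rfl, rfl, rfl, rfl⟩ :=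
      markedForm_eq_append (π := [k]) (σ := []) hu.symm
    subst γ β
    refine .inr ⟨γ', k, idle, s :: β', ?_, by simp [markedForm]⟩
    have hp : g.InProgress ((γ' ++ [k]).unattach ++ [s.val]) [] β'.unattach := by simpa using hp
    simpa using hp.unsnoc
  | @applyFirst a s r A x ha hr =>
    obtain ⟨γ', β', hγ, hβ, rfl, rfl, rfl, rfl⟩ :=
      markedForm_eq_append (π := []) (σ := []) hu.symm
    subst γ β
    refine .inr ⟨γ' ++ x, s, r, β', ?_, by simp [markedForm]⟩
    have hp : g.IsSentential (γ'.unattach ++ .nt A :: β'.unattach) := by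
      simpa [ha] using hp.isSentential
    simpa using hp.inProgress hr
  | @applyNext k a s r r' A x ha hr =>
    obtain ⟨γ', β', hγ, hβ, rfl, rfl, rfl, rfl⟩ :=
      markedForm_eq_append (π := []) (σ := [a]) hu.symm
    subst γ β
    refine .inr ⟨γ' ++ k :: x, s, r', β', ?_, by simp [markedForm]⟩
    rw [hr] at hp
    have hp : g.InProgress (γ' ++ [k]).unattach ((A, (x ++ [s]).unattach) :: r'.val)
        (.nt A :: β'.unattach) := by simpa [ha] using hp
    simpa using hp.apply
  | unmark k =>
    obtain ⟨γ', β', hγ, hβ, rfl, rfl, rfl, rfl⟩ :=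
      markedForm_eq_append (π := []) (σ := []) hu.symm
    subst γ β
    exact .inl ⟨γ' ++ k :: β', by simpa using hp.isSentential, by simp⟩

theorem IsSimForm.rule {l r x y : Str g.SimNT T} (hu : g.IsSimForm (x ++ l ++ y))
    (h : g.Rule l r) : g.IsSimForm (x ++ r ++ y) := by
  rcases hu with ⟨w, -, hw⟩ | ⟨γ, c, r₀, β, hp, hu⟩
  · obtain ⟨_, _, ha⟩ := h.exists_marked_mem
    exact absurd (hw ▸ List.mem_append_left y (List.mem_append_right x ha))
      marked_not_mem_map_plain
  · exact hp.isSimForm_rule hu h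

theorem Nonerasing.exists_rhs_eq (hg : g.Nonerasing) {q : N × Str N T}
    (hq : q ∈ g.prods.flatten) :
    ∃ (x : List g.Letter) (s : g.Letter), (x ++ [s]).unattach = q.2 := by
  obtain ⟨p, hp, hqp⟩ := List.mem_flatten.1 hq
  obtain ⟨x, s, hx⟩ := (List.eq_nil_or_concat (q.2.attachWith _
    fun _ => mem_symbols_of_mem_rhs hq)).resolve_left (by simpa using hg p hp q hqp)
  exact ⟨x, s, by simpa using congrArg List.unattach hx.symm⟩

section Derivations

variable [Finite N]

local notation "Derives" => Relation.ReflTransGen g.simGrammar.Step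

theorem IsSimForm.of_derives {u : Str g.SimNT T} (h : Derives [.nt g.simGrammar.start] u) :
    g.IsSimForm u := by
  induction h with
  | refl => exact .inr ⟨[], g.startLetter, idle, [], .inl ⟨rfl, .refl⟩, rfl⟩
  | tail _ hstep ih =>
    obtain ⟨_, hp, x, y, rfl, rfl⟩ := hstep
    exact ih.rule (Grammar.mem_ofFinite_prods.1 hp)

theorem simGrammar_language_subset : g.simGrammar.language ⊆ g.language := by
  intro w hw
  rcases IsSimForm.of_derives hw with ⟨w', hw', he⟩ | ⟨γ, s, r, β, -, he⟩
  · rw [map_plain, ← GSym.map_mapNT_map_tm Sum.inl w] at he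
    rwa [← List.map_injective_iff.2 (GSym.mapNT_injective Sum.inl_injective) he] at hw'
  · have : marked s r ∈ w.map GSym.tm := by simp [he, markedForm]
    simp [marked] at this

theorem simGrammar_step {l r : Str g.SimNT T} (h : g.Rule l r) (x y : Str g.SimNT T) :
    g.simGrammar.Step (x ++ l ++ y) (x ++ r ++ y) :=
  Grammar.ofFinite_step h x y

theorem step_moveRight (γ : List g.Letter) (s : g.Letter) (r : g.State) (t : g.Letter)
    (β : List g.Letter) :
    g.simGrammar.Step (markedForm γ s r (t :: β)) (markedForm (γ ++ [s]) t r β) := by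
  simpa [markedForm] using simGrammar_step (.moveRight s t r) (γ.map plain) (β.map plain)

theorem step_moveLeft (γ : List g.Letter) (t s : g.Letter) (β : List g.Letter) :
    g.simGrammar.Step (markedForm (γ ++ [t]) s idle β) (markedForm γ t idle (s :: β)) := by
  simpa [markedForm] using simGrammar_step (.moveLeft t s) (γ.map plain) (β.map plain)

theorem step_applyFirst {a s : g.Letter} {r : g.State} {A : N} {x : List g.Letter}
    (ha : a.val = .nt A) (hp : (A, (x ++ [s]).unattach) :: r.val ∈ g.prods)
    (γ β : List g.Letter) :
    g.simGrammar.Step (markedForm γ a idle β) (markedForm (γ ++ x) s r β) := by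
  simpa [markedForm] using simGrammar_step (.applyFirst ha hp) (γ.map plain) (β.map plain)

theorem step_applyNext {k a s : g.Letter} {r r' : g.State} {A : N} {x : List g.Letter}
    (ha : a.val = .nt A) (hr : r.val = (A, (x ++ [s]).unattach) :: r'.val)
    (γ β : List g.Letter) :
    g.simGrammar.Step (markedForm γ k r (a :: β)) (markedForm (γ ++ k :: x) s r' β) := by
  simpa [markedForm] using
    simGrammar_step (.applyNext (k := k) ha hr) (γ.map plain) (β.map plain)

theorem step_unmark (γ : List g.Letter) (s : g.Letter) (β : List g.Letter) :
    g.simGrammar.Step (markedForm γ s idle β) ((γ ++ s :: β).map plain) := by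
  simpa [markedForm] using simGrammar_step (.unmark s) (γ.map plain) (β.map plain)

theorem exists_derives_moveRight (r : g.State) (β δ : List g.Letter) :
    ∀ γ s, ∃ γ' s', γ' ++ [s'] = γ ++ s :: δ ∧
      Derives (markedForm γ s r (δ ++ β)) (markedForm γ' s' r β) := by
  induction δ with
  | nil => exact fun γ s => ⟨γ, s, rfl, .refl⟩
  | cons t δ ih =>
    intro γ s
    obtain ⟨γ', s', he, hd⟩ := ih (γ ++ [s]) t
    exact ⟨γ', s', by simpa using he, .head (step_moveRight γ s r t (δ ++ β)) hd⟩

theorem derives_moveLeft (β δ : List g.Letter) :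
    ∀ γ t s, Derives (markedForm (γ ++ t :: δ) s idle β) (markedForm γ t idle (δ ++ s :: β)) := by
  induction δ with
  | nil => exact fun γ t s => .single (step_moveLeft γ t s β)
  | cons d δ ih =>
    intro γ t s
    simpa using (ih (γ ++ [t]) d s).tail (step_moveLeft γ t d (δ ++ s :: β))

theorem derives_moveIdle {γ γ' β β' : List g.Letter} {s s' : g.Letter}
    (h : γ ++ s :: β = γ' ++ s' :: β') :
    Derives (markedForm γ s idle β) (markedForm γ' s' idle β') := by
  rcases List.append_eq_append_iff.1 h with ⟨_ | ⟨_, δ⟩, rfl, h'⟩ | ⟨_ | ⟨_, δ⟩, rfl, h'⟩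
  · obtain ⟨rfl, rfl⟩ := by simpa only [List.cons_append, List.cons.injEq] using h'
    simpa using .refl
  · obtain ⟨rfl, rfl⟩ := by simpa only [List.cons_append, List.cons.injEq] using h'
    obtain ⟨γ'', s'', he, hd⟩ := exists_derives_moveRight idle β' (δ ++ [s']) γ s
    obtain ⟨rfl, rfl⟩ :=
      List.append_singleton_inj.1 (he.trans (by simp) : _ = (γ ++ s :: δ) ++ [s'])
    simpa using hd
  · obtain ⟨rfl, rfl⟩ := by simpa only [List.cons_append, List.cons.injEq] using h'
    simpa using .refl
  · obtain ⟨rfl, rfl⟩ := by simpa only [List.cons_append, List.cons.injEq] using h'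
    simpa using derives_moveLeft β δ γ' s' s

theorem exists_derives_apply (hg : g.Nonerasing) (r : g.State) (γ : List g.Letter)
    (k : g.Letter) (β : List g.Letter) (v : Str N T) (hm : SCMatch r.val β.unattach v) :
    ∃ γ' s' β', (γ' ++ s' :: β').unattach = (γ ++ [k]).unattach ++ v ∧
      Derives (markedForm γ k r β) (markedForm γ' s' idle β') := by
  obtain ⟨r, hr⟩ := r
  induction r generalizing γ k β v with
  | nil => exact ⟨γ, k, β, by simp [← show β.unattach = v from hm], .refl⟩
  | cons c r ih =>
    obtain ⟨A, y⟩ := c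
    obtain ⟨u₁, u', v', hβ, rfl, hm⟩ := hm
    obtain ⟨β₁, β₂, rfl, rfl, hβ₂⟩ := List.map_eq_append_iff.1 hβ
    obtain ⟨a, β₂, rfl, ha, rfl⟩ := List.map_eq_cons_iff.1 hβ₂
    obtain ⟨x, s, rfl⟩ := hg.exists_rhs_eq (mem_flatten_of_mem_states hr List.mem_cons_self)
    obtain ⟨γ₁, k₁, he₁, hd₁⟩ := exists_derives_moveRight ⟨_, hr⟩ (a :: β₂) β₁ γ k
    have hstep := step_applyNext (k := k₁) (r := ⟨_, hr⟩) (r' := ⟨r, mem_states_of_cons_mem hr⟩)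
      ha rfl γ₁ β₂
    obtain ⟨γ', s', β', he, hd⟩ := ih (γ₁ ++ k₁ :: x) s β₂ v' (mem_states_of_cons_mem hr) hm
    refine ⟨γ', s', β', ?_, hd₁.trans (.head hstep hd)⟩
    rw [he, show γ₁ ++ k₁ :: x = γ₁ ++ [k₁] ++ x by simp, he₁]
    simp

theorem exists_derives_markedForm (hg : g.Nonerasing) {v : Str N T} (hv : g.IsSentential v) :
    ∃ γ s β, (γ ++ s :: β).unattach = v ∧
      Derives [.nt g.simGrammar.start] (markedForm γ s idle β) := by
  induction hv with
  | refl => exact ⟨[], g.startLetter, [], rfl, .refl⟩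
  | tail _ hstep ih =>
    obtain ⟨γ, s, β, rfl, hd⟩ := ih
    obtain ⟨p, hp, hm⟩ := hstep
    obtain ⟨⟨A, y⟩, r, rfl⟩ := List.exists_cons_of_ne_nil (g.nonempty_prods p hp)
    obtain ⟨u₁, u', v', hw, rfl, hm⟩ := hm
    obtain ⟨w₁, w₂, hw', rfl, hw₂⟩ := List.map_eq_append_iff.1 hw
    obtain ⟨a, β₂, rfl, ha, rfl⟩ := List.map_eq_cons_iff.1 hw₂
    obtain ⟨x, t, rfl⟩ := hg.exists_rhs_eq (List.mem_flatten.2 ⟨_, hp, List.mem_cons_self⟩)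
    have hr := mem_states_of_cons_mem (mem_states_of_mem_prods hp)
    obtain ⟨γ', s', β', he, hd'⟩ := exists_derives_apply hg ⟨r, hr⟩ (w₁ ++ x) t β₂ v' hm
    refine ⟨γ', s', β', by simpa using he, hd.trans ((derives_moveIdle hw').trans ?_)⟩
    exact .head (step_applyFirst (r := ⟨r, hr⟩) ha hp w₁ β₂) hd'

theorem language_subset_simGrammar_language (hg : g.Nonerasing) :
    g.language ⊆ g.simGrammar.language := by
  intro w hw
  obtain ⟨γ, s, β, he, hd⟩ := exists_derives_markedForm hg hw
  have hd := hd.tail (step_unmark γ s β)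
  rwa [map_plain, he, GSym.map_mapNT_map_tm] at hd

theorem simGrammar_language (hg : g.Nonerasing) : g.simGrammar.language = g.language :=
  simGrammar_language_subset.antisymm (language_subset_simGrammar_language hg)

end Derivations

end SCG

/-- Every nonerasing scattered context grammar generates a context-sensitive language. -/
theorem nonerasing_scg_context_sensitive {N T : Type} [Fintype N]
    (g : SCG N T) (hg : g.Nonerasing) :
    ∃ (M : Type) (_ : Fintype M) (g' : Grammar M T),
      g'.ContextSensitive ∧ g'.language = g.language :=
  ⟨g.SimNT, Fintype.ofFinite _, g.simGrammar, g.simGrammar_contextSensitive,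
    g.simGrammar_language hg⟩
end
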